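/- arXiv:1801.04501 — 2 statements merged into one kernel-verified Lean document; each statement's English description precedes it below -/
import Mathlib

section
/- Assume 2δ ≥ σ². Then ∫_0^1 (1/ω(λ)) exp{ −∫_λ^1 φ(z)/ω(z) dz } dλ = ∞ if and only if ∫_0^1 (1/z) exp{ −∫_z^1 ( ∫_{(0,∞)} (1 − e^{−us}) μ(ds) ) / ω(u) du } dz = ∞. -/
/-!
On `(0, 1]` the exponent `ω z = c z + σ² z² / 2` lies between `c z` and `(c + σ² / 2) z`, and the
drift part of `φ` contributes `∫_λ^1 δ z / ω z dz ∈ [0, δ / c]` to the exponent. So each integrand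
is bounded by a constant multiple of the other, and one integral diverges iff the other does.
-/

open MeasureTheory Set

lemma lintegral_ofReal_eq_top_of_le_const_mul {f g : ℝ → ℝ} {s : Set ℝ} {K : ℝ}
    (hs : MeasurableSet s) (hK : 0 ≤ K) (hfg : ∀ x ∈ s, f x ≤ K * g x)
    (hf : ∫⁻ x in s, ENNReal.ofReal (f x) = ⊤) :
    ∫⁻ x in s, ENNReal.ofReal (g x) = ⊤ := by
  have hle : ∫⁻ x in s, ENNReal.ofReal (f x)
      ≤ ENNReal.ofReal K * ∫⁻ x in s, ENNReal.ofReal (g x) := by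
    rw [← lintegral_const_mul' _ _ ENNReal.ofReal_ne_top]
    refine setLIntegral_mono' hs fun x hx => ?_
    rw [← ENNReal.ofReal_mul hK]
    exact ENNReal.ofReal_le_ofReal (hfg x hx)
  by_contra hg
  exact ENNReal.mul_ne_top ENNReal.ofReal_ne_top hg (top_le_iff.1 (hf ▸ hle))

lemma lintegral_ofReal_eq_top_iff_of_le_const_mul {f g : ℝ → ℝ} {s : Set ℝ} {K L : ℝ}
    (hs : MeasurableSet s) (hK : 0 ≤ K) (hL : 0 ≤ L)
    (hfg : ∀ x ∈ s, f x ≤ K * g x) (hgf : ∀ x ∈ s, g x ≤ L * f x) :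
    ∫⁻ x in s, ENNReal.ofReal (f x) = ⊤ ↔ ∫⁻ x in s, ENNReal.ofReal (g x) = ⊤ :=
  ⟨lintegral_ofReal_eq_top_of_le_const_mul hs hK hfg,
    lintegral_ofReal_eq_top_of_le_const_mul hs hL hgf⟩

noncomputable def diffusionExponent (c σ z : ℝ) : ℝ := c * z + σ ^ 2 * z ^ 2 / 2

section Diffusion

variable {c σ : ℝ}

lemma mul_le_diffusionExponent (z : ℝ) : c * z ≤ diffusionExponent c σ z := by
  unfold diffusionExponent
  nlinarith [sq_nonneg (σ * z)]

lemma diffusionExponent_le {z : ℝ} (hz₀ : 0 ≤ z) (hz₁ : z ≤ 1) :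
    diffusionExponent c σ z ≤ (c + σ ^ 2 / 2) * z := by
  unfold diffusionExponent
  nlinarith [mul_nonneg (mul_nonneg (sq_nonneg σ) hz₀) (sub_nonneg.2 hz₁)]

lemma diffusionExponent_pos (hc : 0 < c) {z : ℝ} (hz : 0 < z) : 0 < diffusionExponent c σ z :=
  (mul_pos hc hz).trans_le (mul_le_diffusionExponent z)

lemma IntervalIntegrable.div_diffusionExponent (hc : 0 < c) {f : ℝ → ℝ} {a b : ℝ} (ha : 0 < a)
    (hb : 0 < b) (hf : IntervalIntegrable f volume a b) :
    IntervalIntegrable (fun z => f z / diffusionExponent c σ z) volume a b := by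
  simp only [div_eq_mul_inv]
  refine hf.mul_continuousOn (ContinuousOn.inv₀ (by unfold diffusionExponent; fun_prop) ?_)
  intro z hz
  exact (diffusionExponent_pos hc ((lt_min ha hb).trans_le hz.1)).ne'


variable {δ : ℝ}

lemma integral_mul_div_diffusionExponent_mem_Icc (hδ : 0 ≤ δ) (hc : 0 < c) {a : ℝ}
    (ha : 0 < a) (ha₁ : a ≤ 1) :
    ∫ z in a..1, δ * z / diffusionExponent c σ z ∈ Icc 0 (δ / c) := by
  have hint : IntervalIntegrable (fun z => δ * z / diffusionExponent c σ z) volume a 1 :=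
    ((continuous_const_mul δ).intervalIntegrable _ _).div_diffusionExponent hc ha one_pos
  have hbound : ∀ z ∈ Icc a 1, δ * z / diffusionExponent c σ z ∈ Icc 0 (δ / c) := by
    intro z hz
    have hz₀ : 0 < z := ha.trans_le hz.1
    have hω : 0 < diffusionExponent c σ z := diffusionExponent_pos hc hz₀
    refine ⟨by positivity, ?_⟩
    rw [div_le_div_iff₀ hω hc]
    nlinarith [mul_le_diffusionExponent (c := c) (σ := σ) z]
  refine ⟨intervalIntegral.integral_nonneg ha₁ fun z hz => (hbound z hz).1, ?_⟩
  calc ∫ z in a..1, δ * z / diffusionExponent c σ z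
      ≤ ∫ _ in a..1, δ / c :=
        intervalIntegral.integral_mono_on ha₁ hint intervalIntegrable_const
          fun z hz => (hbound z hz).2
    _ = (1 - a) * (δ / c) := by simp [mul_div_assoc]
    _ ≤ δ / c := by nlinarith [div_nonneg hδ hc.le]

variable {ψ : ℝ → ℝ}

lemma integral_add_div_diffusionExponent (hc : 0 < c) {a : ℝ} (ha : 0 < a)
    (hψ : IntervalIntegrable ψ volume a 1) :
    ∫ z in a..1, (δ * z + ψ z) / diffusionExponent c σ z =
      (∫ z in a..1, δ * z / diffusionExponent c σ z) +
        ∫ z in a..1, ψ z / diffusionExponent c σ z := by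
  simp only [add_div]
  exact intervalIntegral.integral_add
    (((continuous_const_mul δ).intervalIntegrable _ _).div_diffusionExponent hc ha one_pos)
    (hψ.div_diffusionExponent hc ha one_pos)

lemma one_div_diffusionExponent_mul_exp_le (hδ : 0 ≤ δ) (hc : 0 < c) {a : ℝ} (ha : 0 < a)
    (ha₁ : a ≤ 1) (hψ : IntervalIntegrable ψ volume a 1) :
    1 / diffusionExponent c σ a *
        Real.exp (-∫ z in a..1, (δ * z + ψ z) / diffusionExponent c σ z) ≤
      1 / c * (1 / a * Real.exp (-∫ z in a..1, ψ z / diffusionExponent c σ z)) := by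
  rw [integral_add_div_diffusionExponent hc ha hψ]
  have hdrift := integral_mul_div_diffusionExponent_mem_Icc (σ := σ) hδ hc ha ha₁
  calc _ ≤ 1 / (c * a) * Real.exp (-∫ z in a..1, ψ z / diffusionExponent c σ z) := by
        gcongr ?_ * ?_
        · exact one_div_le_one_div_of_le (by positivity) (mul_le_diffusionExponent a)
        · exact Real.exp_le_exp.2 (by linarith [hdrift.1])
    _ = _ := by ring

lemma one_div_mul_exp_le (hδ : 0 ≤ δ) (hc : 0 < c) {a : ℝ} (ha : 0 < a) (ha₁ : a ≤ 1)
    (hψ : IntervalIntegrable ψ volume a 1) :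
    1 / a * Real.exp (-∫ z in a..1, ψ z / diffusionExponent c σ z) ≤
      (c + σ ^ 2 / 2) * Real.exp (δ / c) * (1 / diffusionExponent c σ a *
        Real.exp (-∫ z in a..1, (δ * z + ψ z) / diffusionExponent c σ z)) := by
  rw [integral_add_div_diffusionExponent hc ha hψ]
  have hdrift := integral_mul_div_diffusionExponent_mem_Icc (σ := σ) hδ hc ha ha₁
  have hω : 0 < diffusionExponent c σ a := diffusionExponent_pos hc ha
  calc _ ≤ (c + σ ^ 2 / 2) / diffusionExponent c σ a * (Real.exp (δ / c) *
        Real.exp (-((∫ z in a..1, δ * z / diffusionExponent c σ z) +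
          ∫ z in a..1, ψ z / diffusionExponent c σ z))) := by
        gcongr ?_ * ?_
        · rw [div_le_div_iff₀ ha hω]
          linarith [diffusionExponent_le (c := c) (σ := σ) ha.le ha₁]
        · rw [← Real.exp_add]
          exact Real.exp_le_exp.2 (by linarith [hdrift.2])
    _ = _ := by ring

theorem lintegral_exp_neg_integral_div_diffusionExponent_eq_top_iff (hδ : 0 ≤ δ) (hc : 0 < c)
    (hψ : ∀ a ∈ Ioc (0 : ℝ) 1, IntervalIntegrable ψ volume a 1) :
    ∫⁻ a in Ioc (0 : ℝ) 1, ENNReal.ofReal (1 / diffusionExponent c σ a *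
        Real.exp (-∫ z in a..1, (δ * z + ψ z) / diffusionExponent c σ z)) = ⊤ ↔
      ∫⁻ a in Ioc (0 : ℝ) 1, ENNReal.ofReal (1 / a *
        Real.exp (-∫ z in a..1, ψ z / diffusionExponent c σ z)) = ⊤ :=
  lintegral_ofReal_eq_top_iff_of_le_const_mul measurableSet_Ioc (by positivity) (by positivity)
    (fun a ha => one_div_diffusionExponent_mul_exp_le hδ hc ha.1 ha.2 (hψ a ha))
    (fun a ha => one_div_mul_exp_le hδ hc ha.1 ha.2 (hψ a ha))

end Diffusion

noncomputable def jumpExponent (ν : Measure ℝ) (z : ℝ) : ℝ :=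
  ∫ s in Ioi 0, (1 - Real.exp (-(z * s))) ∂ν

lemma one_sub_exp_neg_mul_le (z : ℝ) {s : ℝ} (hs : 0 ≤ s) :
    1 - Real.exp (-(z * s)) ≤ max 1 z * min 1 s := by
  rcases le_total s 1 with hs₁ | hs₁
  · rw [min_eq_right hs₁]
    nlinarith [Real.add_one_le_exp (-(z * s)), le_max_right 1 z]
  · rw [min_eq_left hs₁, mul_one]
    linarith [Real.exp_pos (-(z * s)), le_max_left 1 z]

section Jump

variable {ν : Measure ℝ}

lemma integrableOn_min_one (hν : ∫⁻ s in Ioi (0 : ℝ), ENNReal.ofReal (min 1 s) ∂ν < ⊤) :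
    IntegrableOn (fun s => min 1 s) (Ioi 0) ν := by
  refine ⟨by fun_prop, (hasFiniteIntegral_iff_ofReal ?_).2 hν⟩
  filter_upwards [ae_restrict_mem measurableSet_Ioi] with s hs
  exact le_min zero_le_one hs.le

lemma integrableOn_one_sub_exp_neg_mul
    (hν : ∫⁻ s in Ioi (0 : ℝ), ENNReal.ofReal (min 1 s) ∂ν < ⊤) {z : ℝ} (hz : 0 ≤ z) :
    IntegrableOn (fun s => 1 - Real.exp (-(z * s))) (Ioi 0) ν := by
  refine ((integrableOn_min_one hν).const_mul (max 1 z)).mono' (by fun_prop) ?_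
  filter_upwards [ae_restrict_mem measurableSet_Ioi] with s hs
  have hexp : Real.exp (-(z * s)) ≤ 1 := Real.exp_le_one_iff.2 (by nlinarith [mul_nonneg hz hs.le])
  rw [Real.norm_of_nonneg (by linarith)]
  exact one_sub_exp_neg_mul_le z hs.le

lemma monotoneOn_jumpExponent (hν : ∫⁻ s in Ioi (0 : ℝ), ENNReal.ofReal (min 1 s) ∂ν < ⊤) :
    MonotoneOn (jumpExponent ν) (Ici 0) := by
  intro a ha b hb hab
  refine setIntegral_mono_on (integrableOn_one_sub_exp_neg_mul hν ha)
    (integrableOn_one_sub_exp_neg_mul hν hb) measurableSet_Ioi fun s hs => ?_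
  have : -(b * s) ≤ -(a * s) := neg_le_neg (mul_le_mul_of_nonneg_right hab (le_of_lt hs))
  linarith [Real.exp_le_exp.2 this]

lemma intervalIntegrable_jumpExponent
    (hν : ∫⁻ s in Ioi (0 : ℝ), ENNReal.ofReal (min 1 s) ∂ν < ⊤) {a b : ℝ} (ha : 0 ≤ a)
    (hb : 0 ≤ b) : IntervalIntegrable (jumpExponent ν) volume a b :=
  ((monotoneOn_jumpExponent hν).mono fun _ hz => (le_min ha hb).trans hz.1).intervalIntegrable

end Jump

theorem stmt_9_general
    (μ : Measure ℝ) (δ c σ : ℝ)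
    (hμint : ∫⁻ u in Ioi (0:ℝ), ENNReal.ofReal (min 1 u) ∂μ < ⊤)
    (hδ : 0 ≤ δ) (hc : 0 < c)
    (φ ω : ℝ → ℝ)
    (hφ : ∀ z, φ z = δ * z + ∫ u in Ioi (0:ℝ), (1 - Real.exp (-(z * u))) ∂μ)
    (hω : ∀ z, ω z = c * z + σ ^ 2 * z ^ 2 / 2) :
    (∫⁻ lam in Ioc (0:ℝ) 1,
        ENNReal.ofReal ((1 / ω lam) * Real.exp (-(∫ z in lam..(1:ℝ), φ z / ω z)))) = ⊤ ↔
    (∫⁻ z in Ioc (0:ℝ) 1,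
        ENNReal.ofReal ((1 / z) * Real.exp
          (-(∫ u in z..(1:ℝ),
              (∫ s in Ioi (0:ℝ), (1 - Real.exp (-(u * s))) ∂μ) / ω u)))) = ⊤ := by
  obtain rfl : ω = diffusionExponent c σ := funext hω
  obtain rfl : φ = fun z => δ * z + jumpExponent μ z := funext hφ
  exact lintegral_exp_neg_integral_div_diffusionExponent_eq_top_iff hδ hc
    fun a ha => intervalIntegrable_jumpExponent hμint ha.1.le zero_le_one

/-- Assume 2δ ≥ σ². Then ∫_0^1 (1/ω(λ)) exp{−∫_λ^1 φ(z)/ω(z) dz} dλ = ∞ iff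
∫_0^1 (1/z) exp{−∫_z^1 (∫ (1−e^{−us}) μ(ds))/ω(u) du} dz = ∞. -/
theorem stmt_9
    (μ : Measure ℝ) (δ c σ : ℝ)
    (hμ0 : μ (Iic 0) = 0)
    (hμint : ∫⁻ u in Ioi (0:ℝ), ENNReal.ofReal (min 1 u) ∂μ < ⊤)
    (hδ : 0 ≤ δ) (hc : 0 < c) (hσ : 0 < σ)
    (h2δ : σ ^ 2 ≤ 2 * δ)
    (φ ω : ℝ → ℝ)
    (hφ : ∀ z, φ z = δ * z + ∫ u in Ioi (0:ℝ), (1 - Real.exp (-(z * u))) ∂μ)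
    (hω : ∀ z, ω z = c * z + σ ^ 2 * z ^ 2 / 2) :
    (∫⁻ lam in Ioc (0:ℝ) 1,
        ENNReal.ofReal ((1 / ω lam) * Real.exp (-(∫ z in lam..(1:ℝ), φ z / ω z)))) = ⊤ ↔
    (∫⁻ z in Ioc (0:ℝ) 1,
        ENNReal.ofReal ((1 / z) * Real.exp
          (-(∫ u in z..(1:ℝ),
              (∫ s in Ioi (0:ℝ), (1 - Real.exp (-(u * s))) ∂μ) / ω u)))) = ⊤ :=
  stmt_9_general μ δ c σ hμint hδ hc φ ω hφ hω
end

section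
/- If the log-moment condition ∫_{(1,∞)} ln(u) μ(du) < ∞ holds, then ∫_0^1 (1/z) exp{ −∫_z^1 ( ∫_{(0,∞)} (1 − e^{−us}) μ(ds) ) / ω(u) du } dz = ∞. -/
/-!
Write `Φ(u) = ∫ (1 - e^{-us}) μ(ds)` (`laplaceExponent μ u`). Since `ω(u) ≥ c u` and
`(1 - e^{-us}) / u ≤ min(1/u, s)`, Tonelli gives
`∫_0^1 Φ(u)/ω(u) du ≤ c⁻¹ ∫ (min(1, s) + log⁺ s) μ(ds)`, which is finite by the two moment
conditions. So the exponent is bounded below by some `-B` uniformly in `z`, and the integrand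
dominates `e^{-B} / z`, which is not integrable at `0`.
-/

open MeasureTheory Set Real
open scoped ENNReal

theorem MeasureTheory.sigmaFinite_of_lintegral_ne_top {α : Type*} [MeasurableSpace α]
    {μ : Measure α} {f : α → ℝ≥0∞} (hf : AEMeasurable f μ) (hf_ne_zero : ∀ᵐ x ∂μ, f x ≠ 0)
    (hf_int : ∫⁻ x, f x ∂μ ≠ ∞) : SigmaFinite μ := by
  -- `μ` is the finite measure `μ.withDensity f` reweighted by the a.e. finite density `f⁻¹`.
  have : IsFiniteMeasure (μ.withDensity f) := isFiniteMeasure_withDensity hf_int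
  have hf_ne_top : ∀ᵐ x ∂μ, f x ≠ ∞ := (ae_lt_top' hf hf_int).mono fun _ hx => hx.ne
  rw [← withDensity_inv_same₀ hf hf_ne_zero hf_ne_top]
  exact SigmaFinite.withDensity_of_ne_top <| (withDensity_absolutelyContinuous μ f).ae_le <|
    hf_ne_zero.mono fun _ hx => ENNReal.inv_ne_top.2 hx

theorem MeasureTheory.integral_le_toReal_lintegral_ofReal {α : Type*} [MeasurableSpace α]
    {μ : Measure α} (f : α → ℝ) : ∫ x, f x ∂μ ≤ (∫⁻ x, ENNReal.ofReal (f x) ∂μ).toReal := by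
  by_cases hf : Integrable f μ
  · rw [integral_eq_lintegral_pos_part_sub_lintegral_neg_part hf]
    exact sub_le_self _ ENNReal.toReal_nonneg
  · rw [integral_undef hf]
    exact ENNReal.toReal_nonneg

theorem lintegral_Ioc_zero_one_ofReal_inv_eq_top : ∫⁻ z in Ioc (0:ℝ) 1, ENNReal.ofReal z⁻¹ = ∞ := by
  have h_not_int : ¬ IntegrableOn (fun z : ℝ => z⁻¹) (Ioc 0 1) := by
    rw [← intervalIntegrable_iff_integrableOn_Ioc_of_le zero_le_one, intervalIntegrable_inv_iff]
    simp
  by_contra h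
  refine h_not_int ⟨measurable_inv.aestronglyMeasurable, ?_⟩
  rw [hasFiniteIntegral_iff_ofReal]
  · exact lt_top_iff_ne_top.2 h
  · filter_upwards [ae_restrict_mem measurableSet_Ioc] with z hz
    exact inv_nonneg.2 hz.1.le

theorem lintegral_Ioc_zero_one_eq_top_of_div_le {g : ℝ → ℝ} {r : ℝ} (hr : 0 < r)
    (hg : ∀ z ∈ Ioc (0:ℝ) 1, r / z ≤ g z) : ∫⁻ z in Ioc (0:ℝ) 1, ENNReal.ofReal (g z) = ∞ := by
  refine top_unique ?_
  calc ∞ = ENNReal.ofReal r * ∫⁻ z in Ioc (0:ℝ) 1, ENNReal.ofReal z⁻¹ := by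
        rw [lintegral_Ioc_zero_one_ofReal_inv_eq_top, ENNReal.mul_top (by simpa using hr)]
    _ = ∫⁻ z in Ioc (0:ℝ) 1, ENNReal.ofReal (r / z) := by
        rw [← lintegral_const_mul' _ _ ENNReal.ofReal_ne_top]
        refine setLIntegral_congr_fun measurableSet_Ioc fun z _ => ?_
        rw [← ENNReal.ofReal_mul hr.le, div_eq_mul_inv]
    _ ≤ _ := setLIntegral_mono' measurableSet_Ioc fun z hz => ENNReal.ofReal_le_ofReal (hg z hz)

theorem one_sub_exp_neg_nonneg {x : ℝ} (hx : 0 ≤ x) : 0 ≤ 1 - exp (-x) := by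
  linarith [exp_le_one_iff.2 (neg_nonpos.2 hx)]

theorem one_sub_exp_neg_le_min (x : ℝ) : 1 - exp (-x) ≤ min 1 x :=
  le_min (by linarith [exp_nonneg (-x)]) (by linarith [add_one_le_exp (-x)])

theorem lintegral_Ioc_zero_one_min_inv_le {s : ℝ} (hs : 0 < s) :
    ∫⁻ u in Ioc (0:ℝ) 1, ENNReal.ofReal (min u⁻¹ s)
      ≤ ENNReal.ofReal (min 1 s) + ENNReal.ofReal (log s) := by
  rcases le_or_gt s 1 with hs1 | hs1
  · calc ∫⁻ u in Ioc (0:ℝ) 1, ENNReal.ofReal (min u⁻¹ s)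
        ≤ ∫⁻ _ in Ioc (0:ℝ) 1, ENNReal.ofReal s :=
          lintegral_mono fun u => ENNReal.ofReal_le_ofReal (min_le_right _ _)
      _ = ENNReal.ofReal (min 1 s) := by simp [min_eq_right hs1]
      _ ≤ _ := le_self_add
  have hs_inv : 0 < s⁻¹ := inv_pos.2 hs
  rw [← Ioc_union_Ioc_eq_Ioc hs_inv.le (inv_le_one_of_one_le₀ hs1.le),
    lintegral_union measurableSet_Ioc (Ioc_disjoint_Ioc_of_le le_rfl)]
  gcongr
  · calc ∫⁻ u in Ioc 0 s⁻¹, ENNReal.ofReal (min u⁻¹ s)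
        ≤ ∫⁻ _ in Ioc 0 s⁻¹, ENNReal.ofReal s :=
          lintegral_mono fun u => ENNReal.ofReal_le_ofReal (min_le_right _ _)
      _ = ENNReal.ofReal (min 1 s) := by
          rw [setLIntegral_const, Real.volume_Ioc, sub_zero, ← ENNReal.ofReal_mul hs.le,
            mul_inv_cancel₀ hs.ne', min_eq_left hs1.le]
  · have h_int : IntegrableOn (fun u : ℝ => u⁻¹) (Ioc s⁻¹ 1) := by
      rw [← intervalIntegrable_iff_integrableOn_Ioc_of_le (inv_le_one_of_one_le₀ hs1.le),
        intervalIntegrable_inv_iff]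
      exact Or.inr (notMem_uIcc_of_lt hs_inv one_pos)
    calc ∫⁻ u in Ioc s⁻¹ 1, ENNReal.ofReal (min u⁻¹ s)
        ≤ ∫⁻ u in Ioc s⁻¹ 1, ENNReal.ofReal u⁻¹ :=
          lintegral_mono fun u => ENNReal.ofReal_le_ofReal (min_le_left _ _)
      _ = ENNReal.ofReal (∫ u in s⁻¹..1, u⁻¹) := by
          rw [intervalIntegral.integral_of_le (inv_le_one_of_one_le₀ hs1.le),
            ofReal_integral_eq_lintegral_ofReal h_int]
          filter_upwards [ae_restrict_mem measurableSet_Ioc] with u hu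
          exact inv_nonneg.2 (hs_inv.trans hu.1).le
      _ = ENNReal.ofReal (log s) := by rw [integral_inv_of_pos hs_inv one_pos, one_div, inv_inv]

noncomputable def laplaceExponent (μ : Measure ℝ) (u : ℝ) : ℝ :=
  ∫ s in Ioi 0, (1 - exp (-(u * s))) ∂μ

theorem laplaceExponent_nonneg (μ : Measure ℝ) {u : ℝ} (hu : 0 ≤ u) : 0 ≤ laplaceExponent μ u :=
  setIntegral_nonneg measurableSet_Ioi fun _ hs =>
    one_sub_exp_neg_nonneg (mul_nonneg hu (le_of_lt hs))

theorem ofReal_laplaceExponent_div_le (μ : Measure ℝ) {u : ℝ} (hu : 0 < u) :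
    ENNReal.ofReal (laplaceExponent μ u / u) ≤ ∫⁻ s in Ioi 0, ENNReal.ofReal (min u⁻¹ s) ∂μ := by
  rw [laplaceExponent, ← integral_div]
  refine (ofReal_le_enorm _).trans <| (enorm_integral_le_lintegral_enorm _).trans ?_
  refine setLIntegral_mono' measurableSet_Ioi fun s hs => ?_
  have hus : 0 ≤ u * s := mul_nonneg hu.le (le_of_lt hs)
  rw [Real.enorm_of_nonneg (div_nonneg (one_sub_exp_neg_nonneg hus) hu.le)]
  refine ENNReal.ofReal_le_ofReal ?_
  calc (1 - exp (-(u * s))) / u ≤ min 1 (u * s) / u := by gcongr; exact one_sub_exp_neg_le_min _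
    _ = min u⁻¹ s := by rw [← min_div_div_right hu.le, one_div, mul_div_cancel_left₀ _ hu.ne']

theorem lintegral_Ioc_zero_one_laplaceExponent_div_lt_top {μ : Measure ℝ}
    (h_min : ∫⁻ s in Ioi (0:ℝ), ENNReal.ofReal (min 1 s) ∂μ < ∞)
    (h_log : ∫⁻ s in Ioi (1:ℝ), ENNReal.ofReal (log s) ∂μ < ∞) :
    ∫⁻ u in Ioc (0:ℝ) 1, ENNReal.ofReal (laplaceExponent μ u / u) < ∞ := by
  -- Needed for Tonelli: `μ` itself need not be σ-finite.
  have : SigmaFinite (μ.restrict (Ioi 0)) :=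
    sigmaFinite_of_lintegral_ne_top (f := fun s => ENNReal.ofReal (min 1 s)) (by fun_prop)
      ((ae_restrict_mem measurableSet_Ioi).mono fun s hs => by simpa using hs) h_min.ne
  have h_log' : ∫⁻ s in Ioi (0:ℝ), ENNReal.ofReal (log s) ∂μ < ∞ := by
    refine lt_of_le_of_lt ?_ h_log
    calc ∫⁻ s in Ioi (0:ℝ), ENNReal.ofReal (log s) ∂μ
        ≤ (∫⁻ s in Ioc (0:ℝ) 1, ENNReal.ofReal (log s) ∂μ)
          + ∫⁻ s in Ioi (1:ℝ), ENNReal.ofReal (log s) ∂μ := by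
          rw [← Ioc_union_Ioi_eq_Ioi zero_le_one]; exact lintegral_union_le _ _ _
      _ = ∫⁻ s in Ioi (1:ℝ), ENNReal.ofReal (log s) ∂μ := by
          rw [setLIntegral_congr_fun measurableSet_Ioc (g := fun _ => 0) fun s hs =>
            ENNReal.ofReal_eq_zero.2 (log_nonpos hs.1.le hs.2), lintegral_zero, zero_add]
  calc ∫⁻ u in Ioc (0:ℝ) 1, ENNReal.ofReal (laplaceExponent μ u / u)
      ≤ ∫⁻ u in Ioc (0:ℝ) 1, ∫⁻ s in Ioi 0, ENNReal.ofReal (min u⁻¹ s) ∂μ :=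
        setLIntegral_mono' measurableSet_Ioc fun u hu => ofReal_laplaceExponent_div_le μ hu.1
    _ = ∫⁻ s in Ioi 0, ∫⁻ u in Ioc (0:ℝ) 1, ENNReal.ofReal (min u⁻¹ s) ∂volume ∂μ :=
        lintegral_lintegral_swap (f := fun u s => ENNReal.ofReal (min u⁻¹ s))
          (by fun_prop : Measurable fun p : ℝ × ℝ => ENNReal.ofReal (min p.1⁻¹ p.2)).aemeasurable
    _ ≤ ∫⁻ s in Ioi 0, ENNReal.ofReal (min 1 s) + ENNReal.ofReal (log s) ∂μ :=
        setLIntegral_mono' measurableSet_Ioi fun s hs =>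
          lintegral_Ioc_zero_one_min_inv_le (s := s) hs
    _ < ∞ := by
        rw [lintegral_add_left (by fun_prop)]
        exact ENNReal.add_lt_top.2 ⟨h_min, h_log'⟩

theorem stmt_10_general
    (μ : Measure ℝ) (c σ : ℝ)
    (hμint : ∫⁻ u in Ioi (0:ℝ), ENNReal.ofReal (min 1 u) ∂μ < ⊤)
    (hc : 0 < c)
    (hlog : ∫⁻ u in Ioi (1:ℝ), ENNReal.ofReal (Real.log u) ∂μ < ⊤)
    (ω : ℝ → ℝ)
    (hω : ∀ z, ω z = c * z + σ ^ 2 * z ^ 2 / 2) :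
    (∫⁻ z in Ioc (0:ℝ) 1,
        ENNReal.ofReal ((1 / z) * Real.exp
          (-(∫ u in z..(1:ℝ),
              (∫ s in Ioi (0:ℝ), (1 - Real.exp (-(u * s))) ∂μ) / ω u)))) = ⊤ := by
  set B := ∫⁻ u in Ioc (0:ℝ) 1, ENNReal.ofReal (laplaceExponent μ u / ω u)
  have hB : B ≠ ∞ := by
    refine (lt_of_le_of_lt ?_ (ENNReal.mul_lt_top (ENNReal.ofReal_lt_top (r := c⁻¹))
      (lintegral_Ioc_zero_one_laplaceExponent_div_lt_top hμint hlog))).ne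
    rw [← lintegral_const_mul' _ _ ENNReal.ofReal_ne_top]
    refine setLIntegral_mono' measurableSet_Ioc fun u hu => ?_
    rw [← ENNReal.ofReal_mul (inv_nonneg.2 hc.le)]
    refine ENNReal.ofReal_le_ofReal ?_
    calc laplaceExponent μ u / ω u ≤ laplaceExponent μ u / (c * u) := by
          gcongr
          · exact laplaceExponent_nonneg μ hu.1.le
          · exact mul_pos hc hu.1
          · rw [hω]; nlinarith [sq_nonneg (σ * u)]
      _ = c⁻¹ * (laplaceExponent μ u / u) := by field_simp
  refine lintegral_Ioc_zero_one_eq_top_of_div_le (exp_pos (-B.toReal)) fun z hz => ?_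
  have h_exponent : ∫ u in z..1, laplaceExponent μ u / ω u ≤ B.toReal := by
    rw [intervalIntegral.integral_of_le hz.2]
    exact (integral_le_toReal_lintegral_ofReal _).trans
      (ENNReal.toReal_mono hB (lintegral_mono_set (Ioc_subset_Ioc_left hz.1.le)))
  rw [one_div_mul_eq_div]
  exact div_le_div_of_nonneg_right (exp_le_exp.2 (neg_le_neg h_exponent)) hz.1.le

/-- If the log-moment condition ∫_{(1,∞)} ln(u) μ(du) < ∞ holds, then
∫_0^1 (1/z) exp{−∫_z^1 (∫ (1−e^{−us}) μ(ds))/ω(u) du} dz = ∞. -/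
theorem stmt_10
    (μ : Measure ℝ) (c σ : ℝ)
    (hμ0 : μ (Iic 0) = 0)
    (hμint : ∫⁻ u in Ioi (0:ℝ), ENNReal.ofReal (min 1 u) ∂μ < ⊤)
    (hc : 0 < c) (hσ : 0 ≤ σ)
    (hlog : ∫⁻ u in Ioi (1:ℝ), ENNReal.ofReal (Real.log u) ∂μ < ⊤)
    (ω : ℝ → ℝ)
    (hω : ∀ z, ω z = c * z + σ ^ 2 * z ^ 2 / 2) :
    (∫⁻ z in Ioc (0:ℝ) 1,
        ENNReal.ofReal ((1 / z) * Real.exp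
          (-(∫ u in z..(1:ℝ),
              (∫ s in Ioi (0:ℝ), (1 - Real.exp (-(u * s))) ∂μ) / ω u)))) = ⊤ :=
  stmt_10_general μ c σ hμint hc hlog ω hω
end
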